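/- Let a₁, a₂ > 0 with a₁² + a₂² = 1, z = z_{1−α/2} > 0, and define f : ℝ → ℝ by f(w) = Φ(max(−a₁a₂⁻¹w + a₂⁻¹z, z)) − Φ(max(−a₁a₂⁻¹w − a₂⁻¹z, −z)), where Φ is the standard normal CDF. Then: (i) f(w) = 1 − α for all w ≥ c̈ := a₁⁻¹(1 − a₂)z; (ii) f(w) ≥ 1 − α for w ∈ [−c̈, c̈]; (iii) f is nondecreasing on (−∞, −c̈); and (iv) lim_{w→−∞} f(w) = 0. Consequently, there exists w̄ < −c̈ with f(w̄) = 1 − α such that f is nondecreasing through w̄. -/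

import Mathlib

/-!
For `w ≥ -c̈` the second maximum is `-z`, so `f w ≥ Φ z - Φ (-z) = 1 - α`, with equality once the
first maximum is `z` as well (`w ≥ c̈`). For `w ≤ -c̈` both maxima take their linear branches and
`f w = Φ (u + b) - Φ (u - b)` with `u = -a₁a₂⁻¹w ≥ 0`, `b = a₂⁻¹z`: the normal mass of a window of
fixed width centred at `u`, which decreases as `u` moves away from `0` (the density is larger at
the left end of the window than at the right one) and tends to `0` as `u → ∞`. Since
`f (-c̈) > 1 - α`, the intermediate value theorem gives the crossing point `w̄ < -c̈`.
-/

open MeasureTheory ProbabilityTheory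

noncomputable def stdNormalCDF (t : ℝ) : ℝ :=
  ((gaussianReal 0 1) (Set.Iic t)).toReal

open Filter Topology Set

section StdNormal

local notation "φ" => gaussianPDFReal 0 1

lemma stdNormalCDF_eq_cdf : stdNormalCDF = cdf (gaussianReal 0 1) := by
  funext t
  rw [cdf_eq_real]
  rfl

lemma stdNormalCDF_eq_integral (t : ℝ) : stdNormalCDF t = ∫ x in Iic t, φ x := by
  rw [stdNormalCDF, gaussianReal_apply_eq_integral 0 one_ne_zero, ENNReal.toReal_ofReal]
  exact setIntegral_nonneg measurableSet_Iic fun x _ => gaussianPDFReal_nonneg 0 1 x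

lemma stdNormalCDF_sub_stdNormalCDF (a b : ℝ) :
    stdNormalCDF b - stdNormalCDF a = ∫ x in a..b, φ x := by
  rw [stdNormalCDF_eq_integral, stdNormalCDF_eq_integral]
  exact intervalIntegral.integral_Iic_sub_Iic (integrable_gaussianPDFReal 0 1).integrableOn
    (integrable_gaussianPDFReal 0 1).integrableOn

lemma continuous_gaussianPDFReal_zero_one : Continuous φ := by
  unfold gaussianPDFReal
  fun_prop

lemma strictMono_stdNormalCDF : StrictMono stdNormalCDF := fun a b hab => by
  have hpos : 0 < ∫ x in a..b, φ x :=
    intervalIntegral.intervalIntegral_pos_of_pos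
      (continuous_gaussianPDFReal_zero_one.intervalIntegrable a b)
      (gaussianPDFReal_pos 0 1 · one_ne_zero) hab
  linarith [stdNormalCDF_sub_stdNormalCDF a b]

lemma monotone_stdNormalCDF : Monotone stdNormalCDF := strictMono_stdNormalCDF.monotone

lemma stdNormalCDF_neg (t : ℝ) : stdNormalCDF (-t) = 1 - stdNormalCDF t := by
  have hint := integrable_gaussianPDFReal 0 1
  have hreflect : ∫ x in Iic (-t), φ x = ∫ x in Ioi t, φ x := by
    have hsymm : ∀ x, φ (-x) = φ x := fun x => by simp [gaussianPDFReal]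
    simpa [hsymm] using integral_comp_neg_Iic (-t) φ
  have hsplit : (∫ x in Iic t, φ x) + ∫ x in Ioi t, φ x = 1 := by
    rw [intervalIntegral.integral_Iic_add_Ioi hint.integrableOn hint.integrableOn,
      integral_gaussianPDFReal_eq_one 0 one_ne_zero]
  rw [stdNormalCDF_eq_integral, stdNormalCDF_eq_integral, hreflect]
  linarith

@[fun_prop]
lemma continuous_stdNormalCDF : Continuous stdNormalCDF := by
  have hprim : Continuous fun t => stdNormalCDF 0 + ∫ x in (0 : ℝ)..t, φ x :=
    continuous_const.add ((integrable_gaussianPDFReal 0 1).continuous_primitive 0)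
  convert hprim using 2 with t
  linarith [stdNormalCDF_sub_stdNormalCDF 0 t]

lemma tendsto_stdNormalCDF_atTop : Tendsto stdNormalCDF atTop (𝓝 1) :=
  stdNormalCDF_eq_cdf ▸ tendsto_cdf_atTop _

lemma antitoneOn_stdNormalCDF_add_sub_stdNormalCDF_sub {b : ℝ} (hb : 0 ≤ b) :
    AntitoneOn (fun u => stdNormalCDF (u + b) - stdNormalCDF (u - b)) (Ici 0) := by
  intro u₂ hu₂ u₁ _ h
  have hshift : ∫ x in (u₂ + b)..(u₁ + b), φ x = ∫ x in (u₂ - b)..(u₁ - b), φ (x + 2 * b) := by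
    rw [intervalIntegral.integral_comp_add_right]
    congr 1 <;> ring
  have hdensity : ∫ x in (u₂ - b)..(u₁ - b), φ (x + 2 * b) ≤ ∫ x in (u₂ - b)..(u₁ - b), φ x := by
    refine intervalIntegral.integral_mono_on (by linarith)
      ((continuous_gaussianPDFReal_zero_one.comp (continuous_add_const _)).intervalIntegrable _ _)
      (continuous_gaussianPDFReal_zero_one.intervalIntegrable _ _) fun x hx => ?_
    have hsq : x ^ 2 ≤ (x + 2 * b) ^ 2 := by
      nlinarith [mul_nonneg hb (by linarith [hx.1, mem_Ici.1 hu₂] : (0 : ℝ) ≤ x + b)]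
    simp only [gaussianPDFReal, sub_zero]
    gcongr
  linarith [stdNormalCDF_sub_stdNormalCDF (u₂ + b) (u₁ + b),
    stdNormalCDF_sub_stdNormalCDF (u₂ - b) (u₁ - b)]

end StdNormal

/-- The function `f` of the statement, with `k = a₁a₂⁻¹` and `b = a₂⁻¹z`. -/
noncomputable def coverage (k b z w : ℝ) : ℝ :=
  stdNormalCDF (max (-k * w + b) z) - stdNormalCDF (max (-k * w - b) (-z))

section Coverage

variable {k b z c w : ℝ}

lemma coverage_eq_of_le (hk : 0 ≤ k) (hkc : k * c = b - z) (hzb : z ≤ b) (hw : c ≤ w) :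
    coverage k b z w = stdNormalCDF z - stdNormalCDF (-z) := by
  rw [coverage, max_eq_right (by nlinarith), max_eq_right (by nlinarith)]

lemma le_coverage_of_neg_le (hk : 0 ≤ k) (hkc : k * c = b - z) (hw : -c ≤ w) :
    stdNormalCDF z - stdNormalCDF (-z) ≤ coverage k b z w := by
  rw [coverage, max_eq_right (show -k * w - b ≤ -z by nlinarith)]
  linarith [monotone_stdNormalCDF (le_max_right (-k * w + b) z)]

lemma lt_coverage_neg (hkc : k * c = b - z) (hzb : z < b) :
    stdNormalCDF z - stdNormalCDF (-z) < coverage k b z (-c) := by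
  have hkc' : -k * -c = k * c := by ring
  rw [coverage, max_eq_right (show -k * -c - b ≤ -z by linarith)]
  linarith [strictMono_stdNormalCDF (lt_max_of_lt_left (by linarith) : z < max (-k * -c + b) z)]

lemma coverage_eq_of_le_neg (hk : 0 ≤ k) (hkc : k * c = b - z) (hzb : z ≤ b) (hw : w ≤ -c) :
    coverage k b z w = stdNormalCDF (-k * w + b) - stdNormalCDF (-k * w - b) := by
  rw [coverage, max_eq_left (by nlinarith), max_eq_left (by nlinarith)]

lemma monotoneOn_coverage (hk : 0 ≤ k) (hkc : k * c = b - z) (hz : 0 ≤ z) (hzb : z ≤ b) :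
    MonotoneOn (coverage k b z) (Iio (-c)) := by
  have hlin_anti : AntitoneOn (fun w => -k * w) (Iio (-c)) := fun _ _ _ _ h => by nlinarith
  have hlin_nonneg : MapsTo (fun w => -k * w) (Iio (-c)) (Ici 0) := fun w hw =>
    show 0 ≤ -k * w by nlinarith [mul_nonneg hk (sub_nonneg.2 (mem_Iio.1 hw).le)]
  refine ((antitoneOn_stdNormalCDF_add_sub_stdNormalCDF_sub (hz.trans hzb)).comp hlin_anti
    hlin_nonneg).congr fun w hw => ?_
  exact (coverage_eq_of_le_neg hk hkc hzb (le_of_lt hw)).symm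

lemma tendsto_coverage_atBot (hk : 0 < k) (hkc : k * c = b - z) (hzb : z ≤ b) :
    Tendsto (coverage k b z) atBot (𝓝 0) := by
  have hlin : Tendsto (fun w => -k * w) atBot atTop :=
    tendsto_id.const_mul_atBot_of_neg (neg_lt_zero.2 hk)
  have hwindow : Tendsto (fun w => stdNormalCDF (-k * w + b) - stdNormalCDF (-k * w - b))
      atBot (𝓝 0) := by
    simpa [sub_eq_add_neg] using
      (tendsto_stdNormalCDF_atTop.comp (tendsto_atTop_add_const_right _ b hlin)).sub
        (tendsto_stdNormalCDF_atTop.comp (tendsto_atTop_add_const_right _ (-b) hlin))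
  refine hwindow.congr' ?_
  filter_upwards [eventually_le_atBot (-c)] with w hw
  exact (coverage_eq_of_le_neg hk.le hkc hzb hw).symm

lemma continuous_coverage : Continuous (coverage k b z) := by
  unfold coverage
  fun_prop

end Coverage

lemma exists_crossing_of_monotoneOn_Iio {f : ℝ → ℝ} {a y L : ℝ} (hf : Continuous f)
    (hmono : MonotoneOn f (Iio a)) (hlim : Tendsto f atBot (𝓝 L)) (hL : L < y) (hya : y < f a)
    (hge : ∀ w, a ≤ w → y ≤ f w) :
    ∃ wbar < a, f wbar = y ∧ (∀ w ≤ wbar, f w ≤ f wbar) ∧ ∀ w, wbar ≤ w → f wbar ≤ f w := by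
  obtain ⟨w₀, hw₀y, hw₀a⟩ := ((hlim.eventually_lt_const hL).and (eventually_lt_atBot a)).exists
  obtain ⟨wbar, hwbar, hfwbar⟩ :=
    intermediate_value_Icc hw₀a.le hf.continuousOn ⟨hw₀y.le, hya.le⟩
  have hwbar_lt : wbar < a := lt_of_le_of_ne hwbar.2 (by rintro rfl; linarith)
  refine ⟨wbar, hwbar_lt, hfwbar, fun w hw => hmono (hw.trans_lt hwbar_lt) hwbar_lt hw,
    fun w hw => ?_⟩
  rcases lt_or_ge w a with hwa | hwa
  · exact hmono hwbar_lt hwa hw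
  · exact hfwbar ▸ hge w hwa

theorem stmt10_general (a₁ a₂ α z c : ℝ) (f : ℝ → ℝ)
    (ha₁ : 0 < a₁) (ha₂ : 0 < a₂) (ha : a₁ ^ 2 + a₂ ^ 2 = 1)
    (hzpos : 0 < z)
    (hz : stdNormalCDF z = 1 - α / 2)
    (hc : c = a₁⁻¹ * (1 - a₂) * z)
    (hf : ∀ w, f w = stdNormalCDF (max (-(a₁ * a₂⁻¹) * w + a₂⁻¹ * z) z)
      - stdNormalCDF (max (-(a₁ * a₂⁻¹) * w - a₂⁻¹ * z) (-z))) :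
    (∀ w, c ≤ w → f w = 1 - α) ∧
    (∀ w ∈ Set.Icc (-c) c, 1 - α ≤ f w) ∧
    MonotoneOn f (Set.Iio (-c)) ∧
    Filter.Tendsto f Filter.atBot (nhds 0) ∧
    ∃ wbar < -c, f wbar = 1 - α ∧
      (∀ w ≤ wbar, f w ≤ f wbar) ∧ (∀ w, wbar ≤ w → f wbar ≤ f w) := by
  have ha₂_lt_one : a₂ < 1 := by nlinarith
  have hk : 0 < a₁ * a₂⁻¹ := by positivity
  have hzb : z < a₂⁻¹ * z := lt_mul_left hzpos ((one_lt_inv₀ ha₂).2 ha₂_lt_one)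
  have hkc : a₁ * a₂⁻¹ * c = a₂⁻¹ * z - z := by
    rw [hc]
    field_simp
  have hlevel : stdNormalCDF z - stdNormalCDF (-z) = 1 - α := by
    rw [stdNormalCDF_neg, hz]
    ring
  have hlevel_pos : 0 < 1 - α :=
    hlevel ▸ sub_pos.2 (strictMono_stdNormalCDF (neg_lt_self hzpos))
  obtain rfl : f = coverage (a₁ * a₂⁻¹) (a₂⁻¹ * z) z := funext hf
  have hmono := monotoneOn_coverage hk.le hkc hzpos.le hzb.le
  have hge := fun w (hw : -c ≤ w) => hlevel ▸ le_coverage_of_neg_le hk.le hkc hw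
  have hlim := tendsto_coverage_atBot hk hkc hzb.le
  refine ⟨fun w hw => hlevel ▸ coverage_eq_of_le hk.le hkc hzb.le hw, fun w hw => hge w hw.1,
    hmono, hlim, ?_⟩
  exact exists_crossing_of_monotoneOn_Iio continuous_coverage hmono hlim hlevel_pos
    (hlevel ▸ lt_coverage_neg hkc hzb) hge

/-- Properties of f(w) = Φ(max(−a₁a₂⁻¹w + a₂⁻¹z, z)) − Φ(max(−a₁a₂⁻¹w − a₂⁻¹z, −z)):
(i) f(w) = 1 − α for w ≥ c̈; (ii) f(w) ≥ 1 − α on [−c̈, c̈]; (iii) f nondecreasing on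
(−∞, −c̈); (iv) f(w) → 0 as w → −∞; hence there is w̄ < −c̈ with f(w̄) = 1 − α and f
nondecreasing through w̄. -/
theorem stmt10 (a₁ a₂ α z c : ℝ) (f : ℝ → ℝ)
    (ha₁ : 0 < a₁) (ha₂ : 0 < a₂) (ha : a₁ ^ 2 + a₂ ^ 2 = 1)
    (hα : α ∈ Set.Icc (0:ℝ) 1) (hzpos : 0 < z)
    (hz : stdNormalCDF z = 1 - α / 2)
    (hc : c = a₁⁻¹ * (1 - a₂) * z)
    (hf : ∀ w, f w = stdNormalCDF (max (-(a₁ * a₂⁻¹) * w + a₂⁻¹ * z) z)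
      - stdNormalCDF (max (-(a₁ * a₂⁻¹) * w - a₂⁻¹ * z) (-z))) :
    (∀ w, c ≤ w → f w = 1 - α) ∧
    (∀ w ∈ Set.Icc (-c) c, 1 - α ≤ f w) ∧
    MonotoneOn f (Set.Iio (-c)) ∧
    Filter.Tendsto f Filter.atBot (nhds 0) ∧
    ∃ wbar < -c, f wbar = 1 - α ∧
      (∀ w ≤ wbar, f w ≤ f wbar) ∧ (∀ w, wbar ≤ w → f wbar ≤ f w) :=
  stmt10_general a₁ a₂ α z c f ha₁ ha₂ ha hzpos hz hc hf
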